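/- For all words w, x, y, z with wy ≠ yw and all k ≥ 1, the words x w^k y w^{k−1} z and x w^{k−1} y w^k z are distinct and k-abelian equivalent. Consequently, if a language L contains x w^* y w^* z for some words w, x, y, z with wy ≠ yw, then L has no finite SSF. -/

import Mathlib

/-- `npow w n` is the word `w` repeated `n` times. -/
def npow {α : Type*} (w : List α) : ℕ → List α
  | 0 => []
  | n + 1 => w ++ npow w n

/-- `occ w x` is the number of occurrences of `x` as a factor of `w`,
i.e. the number of factorizations `w = s ++ x ++ t`. -/
def occ {α : Type*} [DecidableEq α] (w x : List α) : ℕ :=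
  ((List.range (w.length + 1)).filter (fun i => x <+: w.drop i)).length

/-- A nonempty word is primitive if it is not a power of a shorter word. -/
def Primitive {α : Type*} (p : List α) : Prop :=
  p ≠ [] ∧ ∀ (q : List α) (n : ℕ), p = npow q n → q = p

/-- `u` and `v` are `k`-abelian equivalent. -/
def KAbEq {α : Type*} [DecidableEq α] (k : ℕ) (u v : List α) : Prop :=
  ∀ x : List α, x.length ≤ k → occ u x = occ v x

/-- `X` is a separating set of factors of `L`. -/
def IsSSF {α : Type*} [DecidableEq α] (X L : Set (List α)) : Prop :=
  ∀ u ∈ L, ∀ v ∈ L, u ≠ v → ∃ x ∈ X, occ u x ≠ occ v x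

/-- `L` has a finite separating set of factors. -/
def HasFiniteSSF {α : Type*} [DecidableEq α] (L : Set (List α)) : Prop :=
  ∃ X : Set (List α), X.Finite ∧ IsSSF X L

/-!
An occurrence of a factor `t` in `a s b` with `|t| ≤ |s| + 1` lies inside `a s` or inside `s b`,
and inside both exactly when it lies inside `s`. Gluing along `s = w^(k-1)`, which commutes with
`w`, both `x w^k y w^(k-1) z` and `x w^(k-1) y w^k z` have, for every `|t| ≤ k`, the count
`|x s|_t + |s w|_t + |s y s|_t + |s z|_t - 3 |s|_t`; and the two words differ because `wy ≠ yw`.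
A finite SSF only sees factors of bounded length `K`, so it cannot separate the pair for `k = K + 1`.
-/

section

variable {α : Type*}

theorem npow_length (w : List α) (n : ℕ) : (npow w n).length = n * w.length := by
  induction n with
  | zero => simp [npow]
  | succ n ih => simp [npow, ih, Nat.succ_mul, Nat.add_comm]

theorem append_npow_comm (w : List α) (n : ℕ) : w ++ npow w n = npow w n ++ w := by
  induction n with
  | zero => simp [npow]
  | succ n ih => rw [npow, ih, ← List.append_assoc, ih]

theorem isPrefix_append_iff_of_length_le {t p q : List α} (h : t.length ≤ p.length) :
    t <+: p ++ q ↔ t <+: p :=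
  ⟨fun ht => List.prefix_of_prefix_length_le ht (List.prefix_append p q) h,
    List.prefix_append_of_prefix⟩

theorem ne_of_move_across (x y z w s : List α) (hws : w ++ s = s ++ w) (hwy : w ++ y ≠ y ++ w) :
    x ++ w ++ s ++ y ++ s ++ z ≠ x ++ s ++ y ++ w ++ s ++ z := by
  intro h
  rw [List.append_assoc x w, hws] at h
  simp only [List.append_assoc, List.append_cancel_left_eq] at h
  exact hwy (List.append_cancel_right (bs := s ++ z) (by simpa only [List.append_assoc] using h))

section Occ

variable [DecidableEq α]

theorem occ_cons (c : α) (u t : List α) :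
    occ (c :: u) t = (if t <+: c :: u then 1 else 0) + occ u t := by
  unfold occ
  rw [List.length_cons, List.range_succ_eq_map, List.filter_cons, List.filter_map]
  split_ifs with h <;> simp_all [Function.comp_def, Nat.add_comm]

theorem occ_append_glue (a s b t : List α) (ht : t.length ≤ s.length + 1) :
    occ (a ++ s ++ b) t + occ s t = occ (a ++ s) t + occ (s ++ b) t := by
  induction a with
  | nil => simp [Nat.add_comm]
  | cons c a ih =>
    have hprefix := isPrefix_append_iff_of_length_le (q := b)
      (show t.length ≤ (c :: a ++ s).length by simp; omega)
    simp only [List.cons_append, occ_cons] at ih hprefix ⊢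
    simp only [hprefix]
    omega

theorem occ_move_across (x y z w s t : List α) (hws : w ++ s = s ++ w)
    (ht : t.length ≤ s.length + 1) :
    occ (x ++ w ++ s ++ y ++ s ++ z) t = occ (x ++ s ++ y ++ w ++ s ++ z) t := by
  have u₁ := occ_append_glue (x ++ w) s (y ++ s ++ z) t ht
  have u₂ := occ_append_glue (s ++ y) s z t ht
  have u₃ := occ_append_glue x s w t ht
  have v₁ := occ_append_glue x s (y ++ w ++ s ++ z) t ht
  have v₂ := occ_append_glue (s ++ y ++ w) s z t ht
  have v₃ := occ_append_glue (s ++ y) s w t ht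
  have hu : occ (x ++ w ++ s) t = occ (x ++ s ++ w) t := by
    rw [List.append_assoc x, hws, List.append_assoc]
  have hv : occ (s ++ y ++ w ++ s) t = occ (s ++ y ++ s ++ w) t := by
    rw [List.append_assoc _ w, hws, ← List.append_assoc]
  simp only [List.append_assoc] at u₁ u₂ u₃ v₁ v₂ v₃ hu hv ⊢
  omega

theorem kAbEq_move_across (x y z w s : List α) (hws : w ++ s = s ++ w) {k : ℕ}
    (hk : k ≤ s.length + 1) :
    KAbEq k (x ++ w ++ s ++ y ++ s ++ z) (x ++ s ++ y ++ w ++ s ++ z) :=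
  fun _ ht => occ_move_across x y z w s _ hws (ht.trans hk)

theorem not_hasFiniteSSF_of_forall_kAbEq {L : Set (List α)}
    (h : ∀ k, 1 ≤ k → ∃ u ∈ L, ∃ v ∈ L, u ≠ v ∧ KAbEq k u v) : ¬ HasFiniteSSF L := by
  rintro ⟨X, hXfin, hX⟩
  obtain ⟨K, hK⟩ := hXfin.image List.length |>.bddAbove
  obtain ⟨u, hu, v, hv, hne, hkab⟩ := h (K + 1) K.succ_pos
  obtain ⟨t, htX, hocc⟩ := hX u hu v hv hne
  exact hocc (hkab t ((hK ⟨t, htX, rfl⟩).trans K.le_succ))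

theorem ne_and_kAbEq_npow (x y z w : List α) (hwy : w ++ y ≠ y ++ w) {k : ℕ} (hk : 1 ≤ k) :
    x ++ npow w k ++ y ++ npow w (k - 1) ++ z ≠ x ++ npow w (k - 1) ++ y ++ npow w k ++ z ∧
      KAbEq k (x ++ npow w k ++ y ++ npow w (k - 1) ++ z)
        (x ++ npow w (k - 1) ++ y ++ npow w k ++ z) := by
  obtain ⟨n, rfl⟩ := Nat.exists_eq_add_of_le' hk
  have hw : w ≠ [] := by rintro rfl; simp at hwy
  have hlen : n + 1 ≤ (npow w n).length + 1 := by
    rw [npow_length]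
    exact Nat.add_le_add_right (Nat.le_mul_of_pos_right n (List.length_pos_iff.mpr hw)) 1
  simp only [Nat.add_sub_cancel, npow, ← List.append_assoc]
  exact ⟨ne_of_move_across x y z w _ (append_npow_comm w n) hwy,
    kAbEq_move_across x y z w _ (append_npow_comm w n) hlen⟩

end Occ

end

/-- For `wy ≠ yw` and `k ≥ 1`, the words `x w^k y w^(k-1) z` and
`x w^(k-1) y w^k z` are distinct and `k`-abelian equivalent; consequently any
language containing `x w^* y w^* z` has no finite SSF. -/
theorem stmt15 {α : Type*} [DecidableEq α] (w x y z : List α)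
    (hwy : w ++ y ≠ y ++ w) :
    (∀ k, 1 ≤ k →
      x ++ npow w k ++ y ++ npow w (k - 1) ++ z ≠
        x ++ npow w (k - 1) ++ y ++ npow w k ++ z ∧
      KAbEq k (x ++ npow w k ++ y ++ npow w (k - 1) ++ z)
              (x ++ npow w (k - 1) ++ y ++ npow w k ++ z)) ∧
    ∀ L : Set (List α),
      (∀ i j : ℕ, x ++ npow w i ++ y ++ npow w j ++ z ∈ L) →
      ¬ HasFiniteSSF L := by
  refine ⟨fun k hk => ne_and_kAbEq_npow x y z w hwy hk, fun L hL => ?_⟩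
  exact not_hasFiniteSSF_of_forall_kAbEq fun k hk =>
    ⟨_, hL k (k - 1), _, hL (k - 1) k, ne_and_kAbEq_npow x y z w hwy hk⟩
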